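/- Let Ω be a bounded domain in ℂⁿ and let K be a compact subset of the topological boundary of Ω such that: (a) every function f continuous on the closure of Ω and holomorphic on Ω satisfies |f(z)| ≤ sup_{w∈K}|f(w)| for all z ∈ Ω, and (b) for every η ∈ K there exists a function f_η continuous on the closure of Ω and holomorphic on Ω with f_η(η) = 1 and |f_η(z)| < 1 for all z in the closure of Ω with z ≠ η. Let D ⊆ Ω be a domain such that K is contained in the topological boundary of D, and suppose there exists a continuous map Φ from the closure of Ω to the closure of D that is holomorphic on Ω and satisfies Φ(Ω) = D and Φ(K) = K. Then: every function g continuous on the closure of D and holomorphic on D satisfies |g(z)| ≤ sup_{w∈K}|g(w)| for all z ∈ D, and every closed subset S of the topological boundary of D with the property that |g(z)| ≤ sup_{w∈S}|g(w)| for all z ∈ D and all such g must contain K. -/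
import Mathlib

lemma aux_le_biSup {α : Type*} (K : Set α) (f : α → ℝ) (B : ℝ) (hB : ∀ w ∈ K, f w ≤ B)
    (w : α) (hw : w ∈ K) : f w ≤ ⨆ v ∈ K, f v := by
  have hb : BddAbove (Set.range fun v => ⨆ _ : v ∈ K, f v) := by
    refine ⟨max B 0, ?_⟩
    rintro x ⟨v, rfl⟩
    simp only
    by_cases h : v ∈ K
    · rw [ciSup_pos (p := v ∈ K) (f := fun _ => f v) h]; exact le_max_of_le_left (hB v h)
    · simp [h]
  calc f w = ⨆ _ : w ∈ K, f w := (ciSup_pos (p := w ∈ K) (f := fun _ => f w) hw).symm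
    _ ≤ ⨆ v ∈ K, f v := le_ciSup hb w

lemma aux_biSup_nonneg {α : Type*} [Nonempty α] (K : Set α) (f : α → ℝ) (hf : ∀ w, 0 ≤ f w) :
    0 ≤ ⨆ v ∈ K, f v :=
  Real.iSup_nonneg fun v => Real.iSup_nonneg fun _ => hf v

lemma aux_biSup_le {α : Type*} [Nonempty α] (K : Set α) (f : α → ℝ) (a : ℝ) (ha : 0 ≤ a)
    (h : ∀ w ∈ K, f w ≤ a) : (⨆ v ∈ K, f v) ≤ a :=
  Real.iSup_le (fun v => Real.iSup_le (fun hv => h v hv) ha) ha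


/-- Let `Ω` be a bounded domain in `ℂⁿ` and `K` a compact subset of `∂Ω` which is a
distinguished boundary for `Ω` (maximum-modulus set, witnessed by `hmax`, together with peak
functions at each of its points, witnessed by `hpeak`).  Let `D ⊆ Ω` be a domain with
`K ⊆ ∂D`, and suppose `Φ : closure Ω → closure D` is continuous, holomorphic on `Ω`, with
`Φ(Ω) = D` and `Φ(K) = K`.  Then `K` is a maximum-modulus set for `D`, and every closed
maximum-modulus set `S ⊆ ∂D` for `D` contains `K`; i.e. `K` is the distinguished boundary
of `D`. -/
theorem stmt0 {n : ℕ} (Ω : Set (Fin n → ℂ)) (hΩ_open : IsOpen Ω) (hΩ_conn : IsConnected Ω)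
    (hΩ_bdd : Bornology.IsBounded Ω)
    (K : Set (Fin n → ℂ)) (hK_cpt : IsCompact K) (hK_bd : K ⊆ frontier Ω)
    (hmax : ∀ f : (Fin n → ℂ) → ℂ, ContinuousOn f (closure Ω) → DifferentiableOn ℂ f Ω →
      ∀ z ∈ Ω, ‖f z‖ ≤ ⨆ w ∈ K, ‖f w‖)
    (hpeak : ∀ η ∈ K, ∃ f : (Fin n → ℂ) → ℂ, ContinuousOn f (closure Ω) ∧
      DifferentiableOn ℂ f Ω ∧ f η = 1 ∧ ∀ z ∈ closure Ω, z ≠ η → ‖f z‖ < 1)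
    (D : Set (Fin n → ℂ)) (hD_open : IsOpen D) (hD_conn : IsConnected D) (hDΩ : D ⊆ Ω)
    (hKD : K ⊆ frontier D)
    (Φ : (Fin n → ℂ) → (Fin n → ℂ)) (hΦ_cont : ContinuousOn Φ (closure Ω))
    (hΦ_maps : Set.MapsTo Φ (closure Ω) (closure D))
    (hΦ_holo : DifferentiableOn ℂ Φ Ω)
    (hΦΩ : Φ '' Ω = D) (hΦK : Φ '' K = K) :
    (∀ g : (Fin n → ℂ) → ℂ, ContinuousOn g (closure D) → DifferentiableOn ℂ g D →
      ∀ z ∈ D, ‖g z‖ ≤ ⨆ w ∈ K, ‖g w‖) ∧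
    (∀ S : Set (Fin n → ℂ), IsClosed S → S ⊆ frontier D →
      (∀ g : (Fin n → ℂ) → ℂ, ContinuousOn g (closure D) → DifferentiableOn ℂ g D →
        ∀ z ∈ D, ‖g z‖ ≤ ⨆ w ∈ S, ‖g w‖) → K ⊆ S) := by
  have hclDΩ : closure D ⊆ closure Ω := closure_mono hDΩ
  have hKclD : K ⊆ closure D := hKD.trans frontier_subset_closure
  have hKclΩ : K ⊆ closure Ω := hKclD.trans hclDΩ
  constructor
  · -- Part 1
    intro g hg_cont hg_holo z hz
    rw [← hΦΩ] at hz
    obtain ⟨w, hwΩ, rfl⟩ := hz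
    have hcomp_cont : ContinuousOn (g ∘ Φ) (closure Ω) := hg_cont.comp hΦ_cont hΦ_maps
    have hΦ_mapsΩ : Set.MapsTo Φ Ω D := hΦΩ ▸ Set.mapsTo_image Φ Ω
    have hcomp_holo : DifferentiableOn ℂ (g ∘ Φ) Ω := hg_holo.comp hΦ_holo hΦ_mapsΩ
    have h1 := hmax (g ∘ Φ) hcomp_cont hcomp_holo w hwΩ
    refine h1.trans ?_
    -- bound for ‖g‖ on K
    obtain ⟨B, hB⟩ := hK_cpt.exists_bound_of_continuousOn (hg_cont.mono hKclD)
    have hΦwK : ∀ v ∈ K, Φ v ∈ K := fun v hv => hΦK ▸ Set.mem_image_of_mem Φ hv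
    refine aux_biSup_le K (fun v => ‖(g ∘ Φ) v‖) _ ?_ ?_
    · exact aux_biSup_nonneg K (fun v => ‖g v‖) fun v => norm_nonneg _
    · intro v hv
      exact aux_le_biSup K (fun v => ‖g v‖) B hB (Φ v) (hΦwK v hv)
  · -- Part 2
    intro S hS_closed hSD hS η hη
    by_contra hηS
    obtain ⟨f, hf_cont, hf_holo, hfη, hf_lt⟩ := hpeak η hη
    have hSclΩ : S ⊆ closure Ω := (hSD.trans frontier_subset_closure).trans hclDΩ
    -- sup of ‖f‖ over S is < 1
    have hc : ∃ c < 1, ∀ z ∈ D, ‖f z‖ ≤ c := by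
      rcases S.eq_empty_or_nonempty with rfl | hSne
      · refine ⟨0, one_pos, fun z hz => ?_⟩
        have := hS f (hf_cont.mono hclDΩ) (hf_holo.mono hDΩ) z hz
        simpa using this
      · have hS_cpt : IsCompact S := by
          refine Metric.isCompact_of_isClosed_isBounded hS_closed ?_
          exact (hΩ_bdd.closure.subset hSclΩ)
        obtain ⟨w0, hw0S, hw0max⟩ := hS_cpt.exists_isMaxOn hSne
          ((hf_cont.mono hSclΩ).norm)
        have hw0lt : ‖f w0‖ < 1 := hf_lt w0 (hSclΩ hw0S) (fun h => hηS (h ▸ hw0S))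
        refine ⟨‖f w0‖, hw0lt, fun z hz => ?_⟩
        have h2 := hS f (hf_cont.mono hclDΩ) (hf_holo.mono hDΩ) z hz
        refine h2.trans (aux_biSup_le S (fun v => ‖f v‖) _ (norm_nonneg _) hw0max)
    obtain ⟨c, hc1, hcb⟩ := hc
    -- η is in closure D, approach by points of D
    have hηcl : η ∈ closure D := hKclD hη
    have hnb : (nhdsWithin η D).NeBot := by
      rw [mem_closure_iff_nhdsWithin_neBot] at hηcl
      exact hηcl
    have htend : Filter.Tendsto f (nhdsWithin η D) (nhds (f η)) :=
      (hf_cont η (hKclΩ hη)).mono_left (nhdsWithin_mono η (hDΩ.trans subset_closure))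
    have : ‖f η‖ ≤ c :=
      le_of_tendsto (htend.norm) (Filter.eventually_iff_exists_mem.2
        ⟨D, self_mem_nhdsWithin, hcb⟩)
    rw [hfη] at this
    simp at this
    linarith
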